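/- In the two-road stochastic network N₂ (road 1 latency x + 1/2, road 2 latency x + ω with ω ∈ {0,1}, unit demand, belief μ = P(ω=1)), for 1/2 ≤ ε ≤ 1 the worst-case social cost over ε-BRUE flows equals: Ψ^μ_ε = 1 + μ if μ ≤ ε − 1/2; Ψ^μ_ε = (3/2 + μ + ε²)/2 + |1/2 − μ|·ε/2 if ε − 1/2 ≤ μ ≤ 3/2 − ε; and Ψ^μ_ε = 3/2 if μ ≥ 3/2 − ε. For 0 ≤ ε ≤ 1/2, Ψ^μ_ε = (3/2 + μ + ε²)/2 + |1/2 − μ|·ε/2 for all μ ∈ [0,1]. -/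
import Mathlib


/-- Expected social cost in network N₂ of the flow `(1 - y, y)` (with `y` the
flow on road 2) under belief `μ`: latencies `c₁(x) = x + 1/2`, `c₂^μ(x) = x + μ`. -/
noncomputable def n2SC (μ y : ℝ) : ℝ := (1 - y) * ((1 - y) + 1/2) + y * (y + μ)

/-- `(1 - y, y)` is an `ε`-BRUE under belief `μ`. -/
def n2BRUE (μ ε y : ℝ) : Prop :=
  0 ≤ y ∧ y ≤ 1 ∧ (y < 1 → (1 - y) + 1/2 ≤ (y + μ) + ε) ∧
    (0 < y → (y + μ) ≤ (1 - y) + 1/2 + ε)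

/-- Worst-case expected social cost `Ψ^μ_ε` over `ε`-BRUE flows. -/
noncomputable def n2Psi (μ ε : ℝ) : ℝ :=
  sSup {z | ∃ y, n2BRUE μ ε y ∧ z = n2SC μ y}

lemma brue_facts {μ ε y : ℝ} (hμ1 : μ ≤ 1) (hμ0 : 0 ≤ μ) (hε : 0 ≤ ε)
    (h : n2BRUE μ ε y) :
    0 ≤ y ∧ y ≤ 1 ∧ (1 - y) + 1/2 ≤ (y + μ) + ε ∧ (y + μ) ≤ (1 - y) + 1/2 + ε := by
  obtain ⟨h0, h1, h2, h3⟩ := h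
  refine ⟨h0, h1, ?_, ?_⟩
  · rcases lt_or_eq_of_le h1 with h | h
    · exact h2 h
    · subst h; linarith
  · rcases lt_or_eq_of_le h0 with h | h
    · exact h3 h
    · subst h; linarith

lemma psi_eq {μ ε t y₀ : ℝ} (h₀ : n2BRUE μ ε y₀) (hval : n2SC μ y₀ = t)
    (hub : ∀ y, n2BRUE μ ε y → n2SC μ y ≤ t) : n2Psi μ ε = t := by
  apply IsGreatest.csSup_eq
  constructor
  · exact ⟨y₀, h₀, hval.symm⟩
  · rintro z ⟨y, hy, rfl⟩; exact hub y hy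

lemma psi_mid {μ ε : ℝ} (hμ0 : 0 ≤ μ) (hμ1 : μ ≤ 1) (hε : 0 ≤ ε)
    (hl : ε - 1/2 ≤ μ) (hr : μ ≤ 3/2 - ε) :
    n2Psi μ ε = (3/2 + μ + ε^2)/2 + |1/2 - μ| * ε / 2 := by
  rcases le_total μ (1/2) with hc | hc
  · rw [abs_of_nonneg (by linarith)]
    apply psi_eq (y₀ := (3/2 - μ + ε)/2)
    · refine ⟨by linarith, by linarith, fun _ => by linarith, fun _ => by linarith⟩
    · unfold n2SC; ring
    · intro y hy
      obtain ⟨h0, h1, h2, h3⟩ := brue_facts hμ1 hμ0 hε hy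
      unfold n2SC
      nlinarith [mul_nonneg (by linarith : (0:ℝ) ≤ (3/2 - μ + ε)/2 - y)
        (by linarith : (0:ℝ) ≤ ε + 2*y - 1 + (1 - 2*μ))]
  · rw [abs_of_nonpos (by linarith)]
    apply psi_eq (y₀ := (3/2 - μ - ε)/2)
    · refine ⟨by linarith, by linarith, fun _ => by linarith, fun _ => by linarith⟩
    · unfold n2SC; ring
    · intro y hy
      obtain ⟨h0, h1, h2, h3⟩ := brue_facts hμ1 hμ0 hε hy
      unfold n2SC
      nlinarith [mul_nonneg (by linarith : (0:ℝ) ≤ y - (3/2 - μ - ε)/2)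
        (by linarith : (0:ℝ) ≤ 1 + ε - 2*y + (2*μ - 1))]

theorem stmt16 (ε μ : ℝ) (hμ : μ ∈ Set.Icc (0:ℝ) 1) :
    (ε ∈ Set.Icc (1/2 : ℝ) 1 →
      (μ ≤ ε - 1/2 → n2Psi μ ε = 1 + μ) ∧
      (ε - 1/2 ≤ μ → μ ≤ 3/2 - ε →
        n2Psi μ ε = (3/2 + μ + ε^2)/2 + |1/2 - μ| * ε / 2) ∧
      (3/2 - ε ≤ μ → n2Psi μ ε = 3/2)) ∧
    (ε ∈ Set.Icc (0:ℝ) (1/2) →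
      n2Psi μ ε = (3/2 + μ + ε^2)/2 + |1/2 - μ| * ε / 2) := by
  obtain ⟨hμ0, hμ1⟩ := hμ
  constructor
  · rintro ⟨hε0, hε1⟩
    refine ⟨fun h => ?_, fun h1 h2 => psi_mid hμ0 hμ1 (by linarith) h1 h2, fun h => ?_⟩
    · apply psi_eq (y₀ := 1)
      · exact ⟨by norm_num, le_refl 1, fun hlt => absurd hlt (lt_irrefl 1), fun _ => by linarith⟩
      · unfold n2SC; ring
      · intro y hy
        obtain ⟨h0', h1', h2', h3'⟩ := brue_facts hμ1 hμ0 (by linarith) hy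
        unfold n2SC
        nlinarith [mul_nonneg (by linarith : (0:ℝ) ≤ 1 - y)
          (by linarith : (0:ℝ) ≤ 2*y + μ - 1/2)]
    · apply psi_eq (y₀ := 0)
      · exact ⟨le_refl 0, by norm_num, fun _ => by linarith, fun hlt => absurd hlt (lt_irrefl 0)⟩
      · unfold n2SC; ring
      · intro y hy
        obtain ⟨h0', h1', h2', h3'⟩ := brue_facts hμ1 hμ0 (by linarith) hy
        unfold n2SC
        nlinarith [mul_nonneg h0' (by linarith : (0:ℝ) ≤ 5/2 - μ - 2*y)]
  · rintro ⟨hε0, hε1⟩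
    exact psi_mid hμ0 hμ1 hε0 (by linarith) (by linarith)
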